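/- Suppose the grading (g_j)_{j∈ℤ} of M_N(ℂ) is good for the nilpotent matrix e ∈ g₂, and let V = g_{−1} = {x ∈ M_N(ℂ) : hx − xh = −x}. Then: (a) the alternating bilinear form B₀(x, y) = tr(e(xy − yx)) on V is nondegenerate; (b) the symmetric bilinear form B₁(x, y) = tr(e(xy + yx)) on V is nondegenerate. (These are the even and odd components of the even nondegenerate skew-supersymmetric form ⟨x, y⟩ = χ([x, y]) on the degree −1 component of q(N).) -/

import Mathlib

/-! An `x ∈ g_{-1}` in the radical of `B₀` (resp. `B₁`) makes `ex − xe` (resp. `ex + xe`) an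
element of `g₁` that is orthogonal to `g_{-1}` under `tr(z y)`; as the trace form pairs `g₁`
perfectly with `g_{-1}`, it vanishes. In case (a) `x` then lies in the centralizer of `e`, which
meets `g_{-1}` trivially because the grading is good. In case (b) `x` anticommutes with `e`, and
`s = exp((πi/2) h)`, which commutes with `h` and anticommutes with `e`, turns it into
`s x ∈ g_{-1}` commuting with `e`; so `s x = 0`, and `x = 0` since `s` is invertible. -/

/-- The `ad h`-eigenspace grading of `M_N(ℂ)`:
`g_j = {x ∈ M_N(ℂ) : hx − xh = j·x}`. -/
noncomputable def adGrading {N : ℕ} (h : Matrix (Fin N) (Fin N) ℂ) (j : ℤ) :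
    Submodule ℂ (Matrix (Fin N) (Fin N) ℂ) where
  carrier := {x | h * x - x * h = (j : ℂ) • x}
  zero_mem' := by simp
  add_mem' := by
    intro a b ha hb
    simp only [Set.mem_setOf_eq] at ha hb ⊢
    rw [smul_add, ← ha, ← hb]
    noncomm_ring
  smul_mem' := by
    intro c a ha
    simp only [Set.mem_setOf_eq] at ha ⊢
    rw [mul_smul_comm, smul_mul_assoc, ← smul_sub, ha]
    exact smul_comm _ _ _


namespace Matrix

variable {n R : Type*} [Fintype n]

theorem trace_commutator_mul [CommRing R] (e x y : Matrix n n R) :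
    ((e * x - x * e) * y).trace = (e * (x * y - y * x)).trace := by
  simp only [sub_mul, mul_sub, trace_sub, Matrix.mul_assoc, trace_mul_comm x (e * y)]

theorem trace_anticommutator_mul [CommSemiring R] (e x y : Matrix n n R) :
    ((e * x + x * e) * y).trace = (e * (x * y + y * x)).trace := by
  simp only [add_mul, mul_add, trace_add, Matrix.mul_assoc, trace_mul_comm x (e * y)]

end Matrix

section AdGrading

variable {N : ℕ} {h : Matrix (Fin N) (Fin N) ℂ}

theorem mem_adGrading {j : ℤ} {x : Matrix (Fin N) (Fin N) ℂ} :
    x ∈ adGrading h j ↔ h * x - x * h = (j : ℂ) • x := Iff.rfl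

theorem mul_mem_adGrading {i j k : ℤ} {x y : Matrix (Fin N) (Fin N) ℂ}
    (hx : x ∈ adGrading h i) (hy : y ∈ adGrading h j) (hk : i + j = k) :
    x * y ∈ adGrading h k := by
  rw [mem_adGrading] at hx hy ⊢
  subst hk
  calc h * (x * y) - x * y * h = (h * x - x * h) * y + x * (h * y - y * h) := by noncomm_ring
    _ = ((i + j : ℤ) : ℂ) • (x * y) := by
      rw [hx, hy, smul_mul_assoc, mul_smul_comm, ← add_smul, Int.cast_add]

theorem trace_eq_zero_of_mem_adGrading {j : ℤ} (hj : j ≠ 0) {x : Matrix (Fin N) (Fin N) ℂ}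
    (hx : x ∈ adGrading h j) : x.trace = 0 := by
  have htr := congrArg Matrix.trace (mem_adGrading.1 hx)
  rw [Matrix.trace_sub, Matrix.trace_mul_comm, sub_self, Matrix.trace_smul, eq_comm,
    smul_eq_zero] at htr
  exact htr.resolve_left (Int.cast_ne_zero.2 hj)

theorem eq_zero_of_forall_trace_mul_eq_zero (hint : DirectSum.IsInternal (adGrading h))
    {j : ℤ} {z : Matrix (Fin N) (Fin N) ℂ} (hz : z ∈ adGrading h j)
    (hzy : ∀ y ∈ adGrading h (-j), (z * y).trace = 0) : z = 0 := by
  refine Matrix.ext_iff_trace_mul_right.2 fun y => ?_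
  have hy : y ∈ ⨆ k, adGrading h k := hint.submodule_iSup_eq_top ▸ Submodule.mem_top
  rw [Matrix.zero_mul, Matrix.trace_zero]
  induction hy using Submodule.iSup_induction' with
  | mem k y hy =>
    obtain rfl | hk := eq_or_ne k (-j)
    · exact hzy y hy
    · -- `z y ∈ g_{j+k}` is traceless for `j + k ≠ 0`
      exact trace_eq_zero_of_mem_adGrading (by omega) (mul_mem_adGrading hz hy rfl)
  | zero => simp
  | add y y' _ _ hy hy' => rw [mul_add, Matrix.trace_add, hy, hy', add_zero]

theorem eq_zero_of_mem_adGrading_of_mem_iSup_nonneg (hind : iSupIndep (adGrading h))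
    {j : ℤ} (hj : j < 0) {x : Matrix (Fin N) (Fin N) ℂ} (hx : x ∈ adGrading h j)
    (hx' : x ∈ ⨆ k ≥ (0 : ℤ), adGrading h k) : x = 0 := by
  have hle : ⨆ k ≥ (0 : ℤ), adGrading h k ≤ ⨆ k ≠ j, adGrading h k :=
    iSup₂_le fun k hk => le_iSup₂_of_le k (by omega) le_rfl
  exact (Submodule.disjoint_def.1 (hind j)) x hx (hle hx')

theorem self_mem_adGrading_zero (h : Matrix (Fin N) (Fin N) ℂ) : h ∈ adGrading h 0 := by
  simp [mem_adGrading]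

theorem exp_smul_mul_of_mem_adGrading {j : ℤ} {e : Matrix (Fin N) (Fin N) ℂ}
    (he : e ∈ adGrading h j) (a : ℂ) :
    NormedSpace.exp (a • h) * e = Complex.exp (a * j) • (e * NormedSpace.exp (a • h)) := by
  have hsemiconj : SemiconjBy e (a • h + (a * j) • 1) (a • h) := by
    rw [SemiconjBy, smul_mul_assoc, sub_eq_iff_eq_add.1 (mem_adGrading.1 he)]
    simp only [mul_add, mul_smul_comm, mul_one]
    module
  have hexp : e * NormedSpace.exp (a • h + (a * j) • 1) = NormedSpace.exp (a • h) * e := by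
    open scoped Matrix.Norms.Operator in exact hsemiconj.exp_right
  rw [← hexp, Matrix.exp_add_of_commute _ _ ((Commute.one_right _).smul_right _),
    Matrix.smul_one_eq_diagonal, Matrix.exp_diagonal, Pi.exp_def, ← Complex.exp_eq_exp_ℂ,
    ← Matrix.smul_one_eq_diagonal, mul_smul_one, mul_smul_comm]

/-- Conjugation by `exp((πi/2) h)` acts on `g_j` as multiplication by `i^j`. -/
theorem exists_isUnit_mem_adGrading_zero_mul_eq_neg {e : Matrix (Fin N) (Fin N) ℂ}
    (he : e ∈ adGrading h 2) :
    ∃ s, IsUnit s ∧ s ∈ adGrading h 0 ∧ s * e = -(e * s) := by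
  refine ⟨NormedSpace.exp (((Real.pi : ℂ) * Complex.I / 2) • h),
    Matrix.isUnit_exp _, ?_, ?_⟩
  · have hcomm := exp_smul_mul_of_mem_adGrading (self_mem_adGrading_zero h)
      ((Real.pi : ℂ) * Complex.I / 2)
    simp only [Int.cast_zero, mul_zero, Complex.exp_zero, one_smul] at hcomm
    simp [mem_adGrading, hcomm]
  · rw [exp_smul_mul_of_mem_adGrading he, Int.cast_ofNat, div_mul_cancel₀ _ two_ne_zero,
      Complex.exp_pi_mul_I, neg_one_smul]

end AdGrading

theorem stmt13_general {N : ℕ} (h e : Matrix (Fin N) (Fin N) ℂ)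
    (hinternal : DirectSum.IsInternal (adGrading h))
    (he : e ∈ adGrading h 2)
    (hgood : ∀ x : Matrix (Fin N) (Fin N) ℂ, x * e = e * x →
      x ∈ ⨆ j ≥ (0 : ℤ), adGrading h j) :
    (∀ x ∈ adGrading h (-1),
      (∀ y ∈ adGrading h (-1), (e * (x * y - y * x)).trace = 0) → x = 0) ∧
    (∀ x ∈ adGrading h (-1),
      (∀ y ∈ adGrading h (-1), (e * (x * y + y * x)).trace = 0) → x = 0) := by
  have hcentralizer : ∀ x ∈ adGrading h (-1), x * e = e * x → x = 0 := fun x hx hxe =>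
    eq_zero_of_mem_adGrading_of_mem_iSup_nonneg hinternal.submodule_iSupIndep (by norm_num) hx
      (hgood x hxe)
  refine ⟨fun x hx hB => hcentralizer x hx ?_, fun x hx hB => ?_⟩
  · have hcomm : e * x - x * e = 0 :=
      eq_zero_of_forall_trace_mul_eq_zero hinternal
        (sub_mem (mul_mem_adGrading he hx (by norm_num)) (mul_mem_adGrading hx he (by norm_num)))
        fun y hy => (Matrix.trace_commutator_mul e x y).trans (hB y hy)
    exact (sub_eq_zero.1 hcomm).symm
  · have hanti : e * x + x * e = 0 :=
      eq_zero_of_forall_trace_mul_eq_zero hinternal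
        (add_mem (mul_mem_adGrading he hx (by norm_num)) (mul_mem_adGrading hx he (by norm_num)))
        fun y hy => (Matrix.trace_anticommutator_mul e x y).trans (hB y hy)
    obtain ⟨s, hs, hs0, hse⟩ := exists_isUnit_mem_adGrading_zero_mul_eq_neg he
    refine hs.mul_right_eq_zero.1 (hcentralizer _ (mul_mem_adGrading hs0 hx (zero_add _)) ?_)
    rw [Matrix.mul_assoc, eq_neg_of_add_eq_zero_right hanti, Matrix.mul_neg, ← Matrix.mul_assoc,
      hse, Matrix.neg_mul, neg_neg, Matrix.mul_assoc]

/-- Suppose the grading `(g_j)` of `M_N(ℂ)` is good for the nilpotent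
matrix `e ∈ g₂`, and let `V = g_{−1}`.  Then (a) the alternating bilinear form
`B₀(x,y) = tr(e(xy − yx))` on `V` is nondegenerate, and (b) the symmetric bilinear form
`B₁(x,y) = tr(e(xy + yx))` on `V` is nondegenerate. -/
theorem stmt13 {N : ℕ} (h e : Matrix (Fin N) (Fin N) ℂ)
    (hinternal : DirectSum.IsInternal (adGrading h))
    (hnil : IsNilpotent e)
    (he : e ∈ adGrading h 2)
    (hgood : ∀ x : Matrix (Fin N) (Fin N) ℂ, x * e = e * x →
      x ∈ ⨆ j ≥ (0 : ℤ), adGrading h j) :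
    (∀ x ∈ adGrading h (-1),
      (∀ y ∈ adGrading h (-1), (e * (x * y - y * x)).trace = 0) → x = 0) ∧
    (∀ x ∈ adGrading h (-1),
      (∀ y ∈ adGrading h (-1), (e * (x * y + y * x)).trace = 0) → x = 0) :=
  stmt13_general h e hinternal he hgood
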